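/- Let a = a_k k a_k⁻¹. Then θ_a(a_k, k)·θ_a(a_k k, a_k⁻¹) / θ_k(a_k⁻¹, a_k) = 1 for all k, a_k ∈ G. -/
import Mathlib

def theta {G : Type*} [Group G] (ω : G → G → G → ℂˣ) (g x y : G) : ℂˣ :=
  ω g x y * ω x y ((x * y)⁻¹ * g * (x * y)) / ω x (x⁻¹ * g * x) y

theorem thetaR {G : Type*} [Group G] (ω : G → G → G → ℂˣ)
    (hcoc : ∀ g h k l : G, ω g h k * ω g (h*k) l * ω h k l = ω (g*h) k l * ω g h (k*l))
    (g x y z : G) :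
    theta ω g x y * theta ω g (x*y) z = theta ω (x⁻¹*g*x) y z * theta ω g x (y*z) := by
  have h1 := hcoc g x y z
  have h2 := hcoc x (x⁻¹*g*x) y z
  have h3 := hcoc x y ((x*y)⁻¹*g*(x*y)) z
  have h4 := hcoc x y z ((x*y*z)⁻¹*g*(x*y*z))
  simp only [theta, mul_assoc, mul_inv_rev, inv_inv, inv_mul_cancel_left, mul_inv_cancel_left] at h1 h2 h3 h4 ⊢
  rw [Units.ext_iff] at h1 h2 h3 h4 ⊢
  push_cast at h1 h2 h3 h4 ⊢
  field_simp
  set A1 : ℂ := ↑(ω g x y) with hA1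
  set A2 : ℂ := ↑(ω g (x*y) z) with hA2
  set A3 : ℂ := ↑(ω x y z) with hA3
  set A4 : ℂ := ↑(ω (g*x) y z) with hA4
  set A5 : ℂ := ↑(ω g x (y*z)) with hA5
  set B1 : ℂ := ↑(ω x (x⁻¹*(g*x)) y) with hB1
  set B2 : ℂ := ↑(ω x (x⁻¹*(g*(x*y))) z) with hB2
  set B3 : ℂ := ↑(ω (x⁻¹*(g*x)) y z) with hB3
  set B5 : ℂ := ↑(ω x (x⁻¹*(g*x)) (y*z)) with hB5
  set C1 : ℂ := ↑(ω x y (y⁻¹*(x⁻¹*(g*(x*y))))) with hC1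
  set C3 : ℂ := ↑(ω y (y⁻¹*(x⁻¹*(g*(x*y)))) z) with hC3
  set C4 : ℂ := ↑(ω (x*y) (y⁻¹*(x⁻¹*(g*(x*y)))) z) with hC4
  set C5 : ℂ := ↑(ω x y (y⁻¹*(x⁻¹*(g*(x*(y*z)))))) with hC5
  set D2 : ℂ := ↑(ω x (y*z) (z⁻¹*(y⁻¹*(x⁻¹*(g*(x*(y*z))))))) with hD2
  set D3 : ℂ := ↑(ω y z (z⁻¹*(y⁻¹*(x⁻¹*(g*(x*(y*z))))))) with hD3
  set D4 : ℂ := ↑(ω (x*y) z (z⁻¹*(y⁻¹*(x⁻¹*(g*(x*(y*z))))))) with hD4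
  have key : A1*C1*(A2*D4)*(C3*B5) * ((A4*A5) * (C4*C5) * (B1*(B2*B3)) * (A3*(D2*D3)))
      = B3*D3*(A5*D2)*(B1*C4) * ((A1*(A2*A3)) * (C1*(B2*C3)) * (A4*B5) * (D4*C5)) := by ring
  rw [h1, h3, ← h2, ← h4] at key
  have hM : ((A4*A5) * (C4*C5) * (B1*(B2*B3)) * (A3*(D2*D3))) ≠ 0 := by
    simp [hA4, hA5, hC4, hC5, hB1, hB2, hB3, hA3, hD2, hD3, mul_eq_zero]
  linear_combination mul_right_cancel₀ hM key

theorem thetaN1 {G : Type*} [Group G] (ω : G → G → G → ℂˣ)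
    (hnorm : ∀ g h k : G, g = 1 ∨ h = 1 ∨ k = 1 → ω g h k = 1) (g y : G) :
    theta ω g 1 y = 1 := by
  unfold theta
  rw [hnorm g 1 y (Or.inr (Or.inl rfl)), hnorm 1 y _ (Or.inl rfl), hnorm 1 _ y (Or.inl rfl)]
  simp

theorem thetaN2 {G : Type*} [Group G] (ω : G → G → G → ℂˣ)
    (hnorm : ∀ g h k : G, g = 1 ∨ h = 1 ∨ k = 1 → ω g h k = 1) (g x : G) :
    theta ω g x 1 = 1 := by
  unfold theta
  rw [hnorm g x 1 (Or.inr (Or.inr rfl)), hnorm x 1 _ (Or.inr (Or.inl rfl)),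
    hnorm x _ 1 (Or.inr (Or.inr rfl))]
  simp

theorem thetaS {G : Type*} [Group G] (ω : G → G → G → ℂˣ) (g x : G) :
    theta ω g g x = theta ω g x (x⁻¹ * g * x) := by
  unfold theta
  simp only [mul_assoc, mul_inv_rev, inv_inv, inv_mul_cancel_left, mul_inv_cancel_left]
  rw [mul_comm]
  rw [mul_div_assoc, div_self', mul_one, mul_div_assoc, div_self', mul_one]

/-- With `a = a_k k a_k⁻¹`: `θ_a(a_k,k)·θ_a(a_k k, a_k⁻¹) / θ_k(a_k⁻¹, a_k) = 1`. -/
theorem theta_T_matrix_coefficient {G : Type*} [Group G] [Fintype G]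
    (ω : G → G → G → ℂˣ)
    (hcoc : ∀ g h k l : G,
      ω g h k * ω g (h * k) l * ω h k l = ω (g * h) k l * ω g h (k * l))
    (hnorm : ∀ g h k : G, g = 1 ∨ h = 1 ∨ k = 1 → ω g h k = 1) :
    ∀ k ak : G,
      theta ω (ak * k * ak⁻¹) ak k * theta ω (ak * k * ak⁻¹) (ak * k) ak⁻¹
          / theta ω k ak⁻¹ ak = 1 := by
  intro k ak
  rw [div_eq_one]
  have e1 := thetaR ω hcoc (ak*k*ak⁻¹) ak k ak⁻¹
  have e2 := thetaR ω hcoc k k ak⁻¹ ak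
  have e3 := thetaR ω hcoc k ak⁻¹ ak (k*ak⁻¹)
  have e4 := thetaR ω hcoc k ak⁻¹ (ak*k*ak⁻¹) ak
  have e5 := thetaR ω hcoc k ak⁻¹ ak k
  have e6 := thetaS ω (ak*k*ak⁻¹) ak
  simp only [mul_assoc, mul_inv_rev, inv_inv, inv_mul_cancel_left, mul_inv_cancel_left,
    inv_mul_cancel, mul_inv_cancel, mul_one, one_mul,
    thetaN1 ω hnorm, thetaN2 ω hnorm] at e1 e2 e3 e4 e5 e6 ⊢
  rw [Units.ext_iff] at e1 e2 e3 e4 e5 e6 ⊢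
  push_cast at e1 e2 e3 e4 e5 e6 ⊢
  have hC : ((theta ω k ak⁻¹ ak : ℂˣ) : ℂ) ≠ 0 := Units.ne_zero _
  refine mul_right_cancel₀ hC ?_
  linear_combination (((theta ω k ak⁻¹ (ak*(k*ak⁻¹)) : ℂˣ) : ℂ) * ((theta ω k (k*ak⁻¹) ak : ℂˣ) : ℂ)) * e1
    + (((theta ω (ak*(k*ak⁻¹)) ak (k*ak⁻¹) : ℂˣ) : ℂ) * ((theta ω k ak⁻¹ (ak*(k*ak⁻¹)) : ℂˣ) : ℂ)) * e2
    - ((theta ω k ak⁻¹ ak : ℂˣ) : ℂ) * e3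
    - (((theta ω (ak*(k*ak⁻¹)) ak k : ℂˣ) : ℂ) * ((theta ω (ak*(k*ak⁻¹)) (ak*k) ak⁻¹ : ℂˣ) : ℂ)) * e4
    + (((theta ω (ak*(k*ak⁻¹)) ak k : ℂˣ) : ℂ) * ((theta ω (ak*(k*ak⁻¹)) (ak*k) ak⁻¹ : ℂˣ) : ℂ)) * e5
    - (((theta ω (ak*(k*ak⁻¹)) ak k : ℂˣ) : ℂ) * ((theta ω (ak*(k*ak⁻¹)) (ak*k) ak⁻¹ : ℂˣ) : ℂ) * ((theta ω k ak⁻¹ (ak*k) : ℂˣ) : ℂ)) * e6
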